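/- Let in addition c_μ > 0 and ζ > 1 be reals with c_β σ > ν + ζ − 1, set c_{μ,l} := c_μ/(l+1)^ζ for integers l ≥ 0, and let τ ≥ 1 be an integer with τ ≤ t. Then Σ_{k=τ}^{t} β_{k,t} · (Σ_{l=k−τ}^{k−1} c_{μ,l}) ≤ (2^{c_β σ} c_β c_μ τ (τ+1)^ζ / (c_β σ − ν − ζ + 1)) · (t+2)^{1−ν−ζ}. -/

import Mathlib

/-!
Because `ν ≤ 1`, every factor satisfies `1 - β_l σ ≤ 1 - c_β σ/(l+1) ≤ ((l+1)/(l+2))^{c_β σ}`,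
so the product defining `β_{k,t}` telescopes and
`β_{k,t} ≤ 2^{c_β σ} c_β (t+2)^{-c_β σ} (k+1)^{c_β σ - ν}`.
Each of the at most `τ` inner terms is at most `c_μ (τ+1)^ζ (k+1)^{-ζ}`, since `k+1 ≤ (τ+1)(l+1)`.
The summand is therefore a multiple of `(k+1)^a` with `a = c_β σ - ν - ζ > -1`, and by Bernoulli's
inequality `∑_{k ≤ t} (k+1)^a ≤ (t+2)^{a+1}/(a+1)`.
-/

open Finset Real

/-- The step size `β_t = c_β/(t+1)^ν`. -/
noncomputable def betaStep (cβ ν : ℝ) (t : ℕ) : ℝ := cβ / ((t : ℝ) + 1) ^ ν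

/-- `β_{k,t} = β_k ∏_{l=k+1}^{t} (1 − β_l σ)`. -/
noncomputable def betaKT (cβ σ ν : ℝ) (k t : ℕ) : ℝ :=
  betaStep cβ ν k * ∏ l ∈ Finset.Icc (k + 1) t, (1 - betaStep cβ ν l * σ)

/-- The mean-field step size `c_{μ,l} = c_μ/(l+1)^ζ`. -/
noncomputable def muStep (cμ ζ : ℝ) (l : ℕ) : ℝ := cμ / ((l : ℝ) + 1) ^ ζ

theorem mul_rpow_sub_one_le_add_one_rpow_sub_rpow {x p : ℝ} (hx : 0 < x) (hp : 1 ≤ p) :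
    p * x ^ (p - 1) ≤ (x + 1) ^ p - x ^ p := by
  have hbern := one_add_mul_self_le_rpow_one_add (by linarith [inv_pos.2 hx] : -1 ≤ x⁻¹) hp
  have hscale : (1 + x⁻¹) ^ p * x ^ p = (x + 1) ^ p := by
    rw [← mul_rpow (by positivity) hx.le, add_mul, inv_mul_cancel₀ hx.ne', one_mul]
  rw [rpow_sub_one hx.ne']
  calc p * (x ^ p / x) = (1 + p * x⁻¹) * x ^ p - x ^ p := by ring
    _ ≤ (x + 1) ^ p - x ^ p := by
      rw [← hscale]; gcongr

theorem mul_rpow_sub_one_le_rpow_sub_sub_one_rpow {x p : ℝ} (hx : 1 ≤ x) (hp0 : 0 ≤ p)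
    (hp1 : p ≤ 1) : p * x ^ (p - 1) ≤ x ^ p - (x - 1) ^ p := by
  have hx0 : 0 < x := by linarith
  have hbern := rpow_one_add_le_one_add_mul_self
    (neg_le_neg (inv_le_one_of_one_le₀ hx) : -1 ≤ -x⁻¹) hp0 hp1
  have hscale : (1 + -x⁻¹) ^ p * x ^ p = (x - 1) ^ p := by
    rw [← mul_rpow (by linarith [inv_le_one_of_one_le₀ hx]) hx0.le, add_mul, neg_mul,
      inv_mul_cancel₀ hx0.ne', one_mul, ← sub_eq_add_neg]
  rw [rpow_sub_one hx0.ne']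
  calc p * (x ^ p / x) = x ^ p - (1 + p * -x⁻¹) * x ^ p := by ring
    _ ≤ x ^ p - (x - 1) ^ p := by
      rw [← hscale]; gcongr

theorem sum_range_add_one_rpow_le {a : ℝ} (ha : -1 < a) (n : ℕ) :
    ∑ k ∈ range n, ((k : ℝ) + 1) ^ a ≤ ((n : ℝ) + 1) ^ (a + 1) / (a + 1) := by
  have hp : 0 < a + 1 := by linarith
  rw [le_div_iff₀ hp, sum_mul]
  rcases le_total 0 a with ha0 | ha0
  · calc ∑ k ∈ range n, ((k : ℝ) + 1) ^ a * (a + 1)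
        ≤ ∑ k ∈ range n, ((((k + 1 : ℕ) : ℝ) + 1) ^ (a + 1) - ((k : ℝ) + 1) ^ (a + 1)) := by
          gcongr with k
          have := mul_rpow_sub_one_le_add_one_rpow_sub_rpow (x := (k : ℝ) + 1)
            (by positivity) (by linarith : 1 ≤ a + 1)
          rw [add_sub_cancel_right] at this
          push_cast
          linarith
      _ = ((n : ℝ) + 1) ^ (a + 1) - 1 := by
          rw [sum_range_sub (fun k : ℕ => ((k : ℝ) + 1) ^ (a + 1))]
          simp
      _ ≤ ((n : ℝ) + 1) ^ (a + 1) := by linarith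
  · calc ∑ k ∈ range n, ((k : ℝ) + 1) ^ a * (a + 1)
        ≤ ∑ k ∈ range n, (((k + 1 : ℕ) : ℝ) ^ (a + 1) - (k : ℝ) ^ (a + 1)) := by
          gcongr with k
          have := mul_rpow_sub_one_le_rpow_sub_sub_one_rpow (x := (k : ℝ) + 1)
            (by simp) hp.le (by linarith)
          rw [add_sub_cancel_right, add_sub_cancel_right] at this
          push_cast
          linarith
      _ = (n : ℝ) ^ (a + 1) := by
          rw [sum_range_sub (fun k : ℕ => (k : ℝ) ^ (a + 1))]
          simp [zero_rpow hp.ne']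
      _ ≤ ((n : ℝ) + 1) ^ (a + 1) := by gcongr; linarith

theorem sum_Icc_add_one_rpow_le {a : ℝ} (ha : -1 < a) (m t : ℕ) :
    ∑ k ∈ Icc m t, ((k : ℝ) + 1) ^ a ≤ ((t : ℝ) + 2) ^ (a + 1) / (a + 1) := by
  have hrange := sum_range_add_one_rpow_le ha (t + 1)
  rw [Nat.cast_succ, add_assoc, one_add_one_eq_two] at hrange
  refine le_trans (sum_le_sum_of_subset_of_nonneg ?_ fun k _ _ => by positivity) hrange
  intro k hk
  rw [mem_range, Nat.lt_succ_iff]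
  exact (mem_Icc.1 hk).2

theorem one_sub_div_le_div_add_one_rpow {c x : ℝ} (hc : 0 ≤ c) (hx : 0 < x) :
    1 - c / x ≤ (x / (x + 1)) ^ c := by
  have hq : 0 < x / (x + 1) := by positivity
  have hlog := one_sub_inv_le_log_of_pos hq
  have hinv : 1 - (x / (x + 1))⁻¹ = -x⁻¹ := by field_simp; ring
  rw [hinv] at hlog
  calc 1 - c / x = c * -x⁻¹ + 1 := by ring
    _ ≤ log (x / (x + 1)) * c + 1 := by nlinarith
    _ ≤ (x / (x + 1)) ^ c := by rw [rpow_def_of_pos hq]; exact add_one_le_exp _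

theorem prod_Icc_add_one_div_add_two {k t : ℕ} (hkt : k ≤ t) :
    ∏ l ∈ Icc (k + 1) t, ((l : ℝ) + 1) / ((l : ℝ) + 2) = ((k : ℝ) + 2) / ((t : ℝ) + 2) := by
  induction t, hkt using Nat.le_induction with
  | base => simp [div_self (by positivity : (k : ℝ) + 2 ≠ 0)]
  | succ n hkn ih =>
    rw [prod_Icc_succ_top (by omega), ih]
    push_cast
    field_simp
    ring

section StepSizes

variable {cβ σ ν : ℝ}

theorem betaStep_nonneg (hcβ : 0 ≤ cβ) (l : ℕ) : 0 ≤ betaStep cβ ν l := by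
  unfold betaStep; positivity

theorem one_sub_betaStep_mul_le (hcβ : 0 ≤ cβ) (hσ : 0 ≤ σ) (hν1 : ν ≤ 1) (l : ℕ) :
    1 - betaStep cβ ν l * σ ≤ (((l : ℝ) + 1) / ((l : ℝ) + 2)) ^ (cβ * σ) := by
  have hl : (1 : ℝ) ≤ (l : ℝ) + 1 := by simp
  have hpow : ((l : ℝ) + 1) ^ ν ≤ (l : ℝ) + 1 := by
    simpa using rpow_le_rpow_of_exponent_le hl hν1
  calc 1 - betaStep cβ ν l * σ ≤ 1 - cβ * σ / ((l : ℝ) + 1) := by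
        rw [betaStep, div_mul_eq_mul_div]
        gcongr
    _ ≤ (((l : ℝ) + 1) / ((l : ℝ) + 1 + 1)) ^ (cβ * σ) :=
        one_sub_div_le_div_add_one_rpow (by positivity) (by positivity)
    _ = (((l : ℝ) + 1) / ((l : ℝ) + 2)) ^ (cβ * σ) := by ring_nf

theorem prod_one_sub_betaStep_mul_le (hcβ : 0 ≤ cβ) (hσ : 0 ≤ σ) (hν1 : ν ≤ 1) {k t : ℕ}
    (hkt : k ≤ t) (hsmall : ∀ l ∈ Icc (k + 1) t, betaStep cβ ν l * σ ≤ 1) :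
    ∏ l ∈ Icc (k + 1) t, (1 - betaStep cβ ν l * σ) ≤ (((k : ℝ) + 2) / ((t : ℝ) + 2)) ^ (cβ * σ) :=
  calc ∏ l ∈ Icc (k + 1) t, (1 - betaStep cβ ν l * σ)
      ≤ ∏ l ∈ Icc (k + 1) t, (((l : ℝ) + 1) / ((l : ℝ) + 2)) ^ (cβ * σ) :=
        prod_le_prod (fun l hl => sub_nonneg.2 (hsmall l hl))
          (fun l _ => one_sub_betaStep_mul_le hcβ hσ hν1 l)
    _ = (((k : ℝ) + 2) / ((t : ℝ) + 2)) ^ (cβ * σ) := by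
        rw [finsetProd_rpow _ _ (fun l _ => by positivity), prod_Icc_add_one_div_add_two hkt]

theorem betaKT_le (hcβ : 0 ≤ cβ) (hσ : 0 ≤ σ) (hν1 : ν ≤ 1) {k t : ℕ} (hkt : k ≤ t)
    (hsmall : ∀ l ∈ Icc (k + 1) t, betaStep cβ ν l * σ ≤ 1) :
    betaKT cβ σ ν k t
      ≤ 2 ^ (cβ * σ) * cβ * ((t : ℝ) + 2) ^ (-(cβ * σ)) * ((k : ℝ) + 1) ^ (cβ * σ - ν) := by
  have hk : (0 : ℝ) < (k : ℝ) + 1 := by positivity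
  have htwo : ((k : ℝ) + 2) ^ (cβ * σ) ≤ 2 ^ (cβ * σ) * ((k : ℝ) + 1) ^ (cβ * σ) := by
    rw [← mul_rpow zero_le_two hk.le]
    gcongr
    linarith
  calc betaKT cβ σ ν k t ≤ betaStep cβ ν k * (((k : ℝ) + 2) / ((t : ℝ) + 2)) ^ (cβ * σ) :=
        mul_le_mul_of_nonneg_left (prod_one_sub_betaStep_mul_le hcβ hσ hν1 hkt hsmall)
          (betaStep_nonneg hcβ k)
    _ = cβ * ((t : ℝ) + 2) ^ (-(cβ * σ)) * ((k : ℝ) + 1) ^ (-ν) * ((k : ℝ) + 2) ^ (cβ * σ) := by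
        rw [betaStep, div_rpow (by positivity) (by positivity), rpow_neg (by positivity),
          rpow_neg hk.le]
        ring
    _ ≤ cβ * ((t : ℝ) + 2) ^ (-(cβ * σ)) * ((k : ℝ) + 1) ^ (-ν)
          * (2 ^ (cβ * σ) * ((k : ℝ) + 1) ^ (cβ * σ)) := by gcongr
    _ = 2 ^ (cβ * σ) * cβ * ((t : ℝ) + 2) ^ (-(cβ * σ)) * ((k : ℝ) + 1) ^ (cβ * σ - ν) := by
        rw [sub_eq_neg_add, rpow_add hk]
        ring

end StepSizes

section MeanFieldSteps

variable {cμ ζ : ℝ}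

theorem muStep_le_of_le_add (hcμ : 0 ≤ cμ) (hζ : 0 ≤ ζ) {k l τ : ℕ} (h : k ≤ l + τ) :
    muStep cμ ζ l ≤ cμ * ((τ : ℝ) + 1) ^ ζ * ((k : ℝ) + 1) ^ (-ζ) := by
  have hk : ((k : ℝ) + 1) ≤ ((τ : ℝ) + 1) * ((l : ℝ) + 1) := by
    have : (k : ℝ) ≤ l + τ := by exact_mod_cast h
    nlinarith [(Nat.cast_nonneg l : (0 : ℝ) ≤ l), (Nat.cast_nonneg τ : (0 : ℝ) ≤ τ)]
  have hpow : ((k : ℝ) + 1) ^ ζ ≤ ((τ : ℝ) + 1) ^ ζ * ((l : ℝ) + 1) ^ ζ := by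
    rw [← mul_rpow (by positivity) (by positivity)]
    gcongr
  rw [muStep, rpow_neg (by positivity), ← div_eq_mul_inv, div_le_div_iff₀ (by positivity)
    (by positivity)]
  calc cμ * ((k : ℝ) + 1) ^ ζ ≤ cμ * (((τ : ℝ) + 1) ^ ζ * ((l : ℝ) + 1) ^ ζ) := by gcongr
    _ = cμ * ((τ : ℝ) + 1) ^ ζ * ((l : ℝ) + 1) ^ ζ := by ring

theorem sum_Icc_muStep_le (hcμ : 0 ≤ cμ) (hζ : 0 ≤ ζ) {τ : ℕ} (hτ : 1 ≤ τ) (k : ℕ) :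
    ∑ l ∈ Icc (k - τ) (k - 1), muStep cμ ζ l
      ≤ τ * (cμ * ((τ : ℝ) + 1) ^ ζ * ((k : ℝ) + 1) ^ (-ζ)) := by
  have hcard : #(Icc (k - τ) (k - 1)) ≤ τ := by
    rw [Nat.card_Icc]; omega
  calc ∑ l ∈ Icc (k - τ) (k - 1), muStep cμ ζ l
      ≤ #(Icc (k - τ) (k - 1)) • (cμ * ((τ : ℝ) + 1) ^ ζ * ((k : ℝ) + 1) ^ (-ζ)) :=
        sum_le_card_nsmul _ _ _ fun l hl =>
          muStep_le_of_le_add hcμ hζ (by rw [mem_Icc] at hl; omega)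
    _ ≤ τ * (cμ * ((τ : ℝ) + 1) ^ ζ * ((k : ℝ) + 1) ^ (-ζ)) := by
        rw [nsmul_eq_mul]
        gcongr

end MeanFieldSteps

theorem betaKT_mul_sum_muStep_le {cβ σ ν cμ ζ : ℝ} (hcβ : 0 ≤ cβ) (hσ : 0 ≤ σ) (hν1 : ν ≤ 1)
    (hcμ : 0 ≤ cμ) (hζ : 0 ≤ ζ) {τ k t : ℕ} (hτ : 1 ≤ τ) (hkt : k ≤ t)
    (hsmall : ∀ l ∈ Icc (k + 1) t, betaStep cβ ν l * σ ≤ 1) :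
    betaKT cβ σ ν k t * ∑ l ∈ Icc (k - τ) (k - 1), muStep cμ ζ l
      ≤ 2 ^ (cβ * σ) * cβ * cμ * τ * ((τ : ℝ) + 1) ^ ζ * ((t : ℝ) + 2) ^ (-(cβ * σ))
          * ((k : ℝ) + 1) ^ (cβ * σ - ν - ζ) := by
  calc betaKT cβ σ ν k t * ∑ l ∈ Icc (k - τ) (k - 1), muStep cμ ζ l
      ≤ (2 ^ (cβ * σ) * cβ * ((t : ℝ) + 2) ^ (-(cβ * σ)) * ((k : ℝ) + 1) ^ (cβ * σ - ν))
          * (τ * (cμ * ((τ : ℝ) + 1) ^ ζ * ((k : ℝ) + 1) ^ (-ζ))) :=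
        mul_le_mul (betaKT_le hcβ hσ hν1 hkt hsmall) (sum_Icc_muStep_le hcμ hζ hτ k)
          (sum_nonneg fun l _ => by unfold muStep; positivity) (by positivity)
    _ = 2 ^ (cβ * σ) * cβ * cμ * τ * ((τ : ℝ) + 1) ^ ζ * ((t : ℝ) + 2) ^ (-(cβ * σ))
          * ((k : ℝ) + 1) ^ (cβ * σ - ν - ζ) := by
        rw [sub_eq_add_neg (cβ * σ - ν), rpow_add (by positivity)]
        ring

theorem sum_betaKT_mul_sum_muStep_le_general (cβ σ ν : ℝ) (hcβ : 0 < cβ) (hσ : 0 < σ)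
    (hν1 : ν ≤ 1) (t : ℕ)
    (hsmall : ∀ l : ℕ, l ≤ t → betaStep cβ ν l * σ ≤ 1)
    (cμ ζ : ℝ) (hcμ : 0 < cμ) (hζ : 1 < ζ)
    (hgap : ν + ζ - 1 < cβ * σ)
    (τ : ℕ) (hτ : 1 ≤ τ) :
    ∑ k ∈ Finset.Icc τ t, betaKT cβ σ ν k t * ∑ l ∈ Finset.Icc (k - τ) (k - 1), muStep cμ ζ l
      ≤ (2 : ℝ) ^ (cβ * σ) * cβ * cμ * (τ : ℝ) * ((τ : ℝ) + 1) ^ ζ / (cβ * σ - ν - ζ + 1)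
          * ((t : ℝ) + 2) ^ (1 - ν - ζ) := by
  have ha : -1 < cβ * σ - ν - ζ := by linarith
  have hexp : ((t : ℝ) + 2) ^ (1 - ν - ζ)
      = ((t : ℝ) + 2) ^ (-(cβ * σ)) * ((t : ℝ) + 2) ^ (cβ * σ - ν - ζ + 1) := by
    rw [← rpow_add (by positivity)]
    ring_nf
  calc ∑ k ∈ Icc τ t, betaKT cβ σ ν k t * ∑ l ∈ Icc (k - τ) (k - 1), muStep cμ ζ l
      ≤ ∑ k ∈ Icc τ t, 2 ^ (cβ * σ) * cβ * cμ * τ * ((τ : ℝ) + 1) ^ ζ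
          * ((t : ℝ) + 2) ^ (-(cβ * σ)) * ((k : ℝ) + 1) ^ (cβ * σ - ν - ζ) :=
        sum_le_sum fun k hk => betaKT_mul_sum_muStep_le hcβ.le hσ.le hν1 hcμ.le (by linarith) hτ
          (mem_Icc.1 hk).2 fun l hl => hsmall l (mem_Icc.1 hl).2
    _ ≤ 2 ^ (cβ * σ) * cβ * cμ * τ * ((τ : ℝ) + 1) ^ ζ * ((t : ℝ) + 2) ^ (-(cβ * σ))
          * (((t : ℝ) + 2) ^ (cβ * σ - ν - ζ + 1) / (cβ * σ - ν - ζ + 1)) := by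
        rw [← mul_sum]
        gcongr
        exact sum_Icc_add_one_rpow_le ha τ t
    _ = (2 : ℝ) ^ (cβ * σ) * cβ * cμ * (τ : ℝ) * ((τ : ℝ) + 1) ^ ζ / (cβ * σ - ν - ζ + 1)
          * ((t : ℝ) + 2) ^ (1 - ν - ζ) := by
        rw [hexp]
        ring

/-- if `c_μ > 0`, `ζ > 1`, `c_β σ > ν + ζ − 1` and `1 ≤ τ ≤ t`, then
`Σ_{k=τ}^{t} β_{k,t} (Σ_{l=k−τ}^{k−1} c_{μ,l})
  ≤ (2^{c_β σ} c_β c_μ τ (τ+1)^ζ / (c_β σ − ν − ζ + 1)) (t+2)^{1−ν−ζ}`. -/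
theorem sum_betaKT_mul_sum_muStep_le (cβ σ ν : ℝ) (hcβ : 0 < cβ) (hσ : 0 < σ) (hσ1 : σ ≤ 1)
    (hν : 0 < ν) (hν1 : ν ≤ 1) (t : ℕ)
    (hsmall : ∀ l : ℕ, l ≤ t → betaStep cβ ν l * σ ≤ 1)
    (cμ ζ : ℝ) (hcμ : 0 < cμ) (hζ : 1 < ζ)
    (hgap : ν + ζ - 1 < cβ * σ)
    (τ : ℕ) (hτ : 1 ≤ τ) (hτt : τ ≤ t) :
    ∑ k ∈ Finset.Icc τ t, betaKT cβ σ ν k t * ∑ l ∈ Finset.Icc (k - τ) (k - 1), muStep cμ ζ l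
      ≤ (2 : ℝ) ^ (cβ * σ) * cβ * cμ * (τ : ℝ) * ((τ : ℝ) + 1) ^ ζ / (cβ * σ - ν - ζ + 1)
          * ((t : ℝ) + 2) ^ (1 - ν - ζ) :=
  sum_betaKT_mul_sum_muStep_le_general cβ σ ν hcβ hσ hν1 t hsmall cμ ζ hcμ hζ hgap τ hτ
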